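/- arXiv:1802.00979 — 3 statements merged into one kernel-verified Lean document; each statement's English description precedes it below -/
import Mathlib

section
/- The class of all finite linearly ordered posets has the ordering property: for every finite poset (A, ⊑) there is a finite poset (B, ⊑_B) such that for every linear extension < of ⊑ and every linear extension ⊏ of ⊑_B, the linearly ordered poset (A, ⊑, <) embeds into (B, ⊑_B, ⊏). -/
/-!
Fixing a linear extension of the given poset, it suffices to find, for every finite linearly
ordered poset `A`, a finite poset `Q` such that `A` embeds into every linear extension of `Q`;
a finite poset has finitely many linear extensions, and the disjoint union of the posets found
for them works for all of them at once.

This goes by induction on `|A|`. The `<`-largest element `m` of `A` is `⊑`-maximal, and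
`A ∖ {m}` embeds into every linear extension of some `W`. Let `Q` consist of two disjoint
copies of `W` together with, for each subset `S` of them, a new maximal element lying exactly
above the down-closure of `S`. A linear extension of `Q` restricts to both copies and so yields
copies `f₀, f₁` of `A ∖ {m}`; comparing the two images of the largest element of `A ∖ {m}`,
for some `s` every element of `f_s` precedes an element of `f_{1-s}`. The new element over
`f_s(↓m) ∪ f_{1-s}(A ∖ {m})` then lies above exactly `f_s(↓m)` within copy `s` and after all
of `f_s`, so sending `m` to it extends `f_s` to an embedding of `A`.
-/

/-- A finite linearly ordered poset `(A, ⊑, <)`: a finite partial order `le` (⊑)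
together with a strict linear order `lt` (<) extending it. -/
structure LOP : Type 1 where
  carrier : Type
  finite : Finite carrier
  le : carrier → carrier → Prop
  lt : carrier → carrier → Prop
  po : IsPartialOrder carrier le
  sto : IsStrictTotalOrder carrier lt
  extend : ∀ a b, le a b → a ≠ b → lt a b

/-- Embeddings of linearly ordered posets: injective maps preserving and reflecting ⊑ and <. -/
def LOP.IsEmb (A B : LOP) (f : A.carrier → B.carrier) : Prop :=
  Function.Injective f ∧ (∀ a b, A.le a b ↔ B.le (f a) (f b)) ∧
    (∀ a b, A.lt a b ↔ B.lt (f a) (f b))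

def LOP.Embeds (A B : LOP) : Prop := ∃ f, A.IsEmb B f

/-- `A` and `B` are isomorphic linearly ordered posets. -/
def LOP.Iso (A B : LOP) : Prop := ∃ f, A.IsEmb B f ∧ Function.Surjective f

/-- `S` is (the underlying set of) a substructure of `C` isomorphic to `A`. -/
def LOP.IsCopy (A C : LOP) (S : Set C.carrier) : Prop :=
  ∃ f, A.IsEmb C f ∧ Set.range f = S

/-- `C ⟶ (B)^A_k`. -/
def LOP.Arrows (C B A : LOP) (k : ℕ) : Prop :=
  ∀ χ : Set C.carrier → Fin k,
    ∃ Bt : Set C.carrier, B.IsCopy C Bt ∧ ∃ j : Fin k,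
      ∀ S : Set C.carrier, A.IsCopy C S → S ⊆ Bt → χ S = j

/-- The Ramsey property for a class of finite linearly ordered posets. -/
def RamseyProp (K : LOP → Prop) : Prop :=
  ∀ A B, K A → K B → A.Embeds B → ∀ k : ℕ, 2 ≤ k →
    ∃ C, K C ∧ C.Arrows B A k

/-- The complemented lexicographic order: `A <c̄lex B` iff `A ⊋ B`, or
`min(A∖B) < min(B∖A)` when `A` and `B` are ⊆-incomparable. -/
def clexLt (n : ℕ) (A B : Finset (Fin n)) : Prop :=
  B ⊂ A ∨ (¬ A ⊆ B ∧ ¬ B ⊆ A ∧ (A \ B).min < (B \ A).min)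

theorem clexLt_iff (n : ℕ) (A B : Finset (Fin n)) :
    clexLt n A B ↔ ∃ p : Fin n, p ∈ A ∧ p ∉ B ∧ ∀ x, x < p → (x ∈ A ↔ x ∈ B) := by
  constructor
  · rintro (h | ⟨h1, h2, h3⟩)
    · have hne : (A \ B).Nonempty := Finset.sdiff_nonempty.2 (fun hs => h.not_subset hs)
      refine ⟨(A \ B).min' hne, ?_, ?_, ?_⟩
      · exact (Finset.mem_sdiff.1 ((A \ B).min'_mem hne)).1
      · exact (Finset.mem_sdiff.1 ((A \ B).min'_mem hne)).2
      · intro x hx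
        constructor
        · intro hxA
          by_contra hxB
          exact absurd (Finset.min'_le _ x (Finset.mem_sdiff.2 ⟨hxA, hxB⟩)) (not_le.2 hx)
        · intro hxB
          exact h.subset hxB
    · have hne : (A \ B).Nonempty := Finset.sdiff_nonempty.2 h1
      refine ⟨(A \ B).min' hne, ?_, ?_, ?_⟩
      · exact (Finset.mem_sdiff.1 ((A \ B).min'_mem hne)).1
      · exact (Finset.mem_sdiff.1 ((A \ B).min'_mem hne)).2
      · intro x hx
        constructor
        · intro hxA
          by_contra hxB
          exact absurd (Finset.min'_le _ x (Finset.mem_sdiff.2 ⟨hxA, hxB⟩)) (not_le.2 hx)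
        · intro hxB
          by_contra hxA
          have hmem : x ∈ B \ A := Finset.mem_sdiff.2 ⟨hxB, hxA⟩
          have h4 : (B \ A).min ≤ (x : WithTop (Fin n)) := Finset.min_le hmem
          have h5 : ((A \ B).min' hne : WithTop (Fin n)) = (A \ B).min := Finset.coe_min' hne
          have h6 : (x : WithTop (Fin n)) < ((A \ B).min' hne : WithTop (Fin n)) :=
            WithTop.coe_lt_coe.2 hx
          rw [h5] at h6
          exact absurd (h4.trans_lt (h6.trans h3)) (lt_irrefl _)
  · rintro ⟨p, hpA, hpB, hagree⟩
    by_cases hBA : B ⊆ A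
    · exact Or.inl (Finset.ssubset_iff_of_subset hBA |>.2 ⟨p, hpA, hpB⟩)
    · refine Or.inr ⟨fun hAB => hpB (hAB hpA), hBA, ?_⟩
      have h1 : (A \ B).min ≤ (p : WithTop (Fin n)) :=
        Finset.min_le (Finset.mem_sdiff.2 ⟨hpA, hpB⟩)
      have hne2 : (B \ A).Nonempty := Finset.sdiff_nonempty.2 hBA
      have hb := Finset.mem_sdiff.1 ((B \ A).min'_mem hne2)
      have hpb : p < (B \ A).min' hne2 := by
        rcases lt_trichotomy ((B \ A).min' hne2) p with h | h | h
        · exact absurd ((hagree _ h).2 hb.1) hb.2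
        · exact absurd (h ▸ hpB) (fun hh => hh hb.1)
        · exact h
      have h2 : (p : WithTop (Fin n)) < (B \ A).min := by
        rw [← Finset.coe_min' hne2]
        exact_mod_cast hpb
      exact h1.trans_lt h2

theorem clexLt_sto (n : ℕ) : IsStrictTotalOrder (Finset (Fin n)) (clexLt n) :=
  { trichotomous := fun A B => by
      suffices H : clexLt n A B ∨ A = B ∨ clexLt n B A by
        intro h1 h2
        rcases H with h | h | h
        exacts [absurd h h1, h, absurd h h2]
      by_cases hAB : A = B
      · exact Or.inr (Or.inl hAB)
      · have hne : ((A \ B) ∪ (B \ A)).Nonempty := by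
          rw [Finset.nonempty_iff_ne_empty]
          intro h
          rcases Finset.union_eq_empty.1 h with ⟨h1, h2⟩
          exact hAB (Finset.Subset.antisymm (Finset.sdiff_eq_empty_iff_subset.1 h1)
            (Finset.sdiff_eq_empty_iff_subset.1 h2))
        set u := ((A \ B) ∪ (B \ A)).min' hne with hu_def
        have hu : u ∈ (A \ B) ∪ (B \ A) := Finset.min'_mem _ hne
        have hagree : ∀ x, x < u → (x ∈ A ↔ x ∈ B) := by
          intro x hx
          constructor
          · intro hxA
            by_contra hxB
            exact absurd (Finset.min'_le _ x (Finset.mem_union_left _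
              (Finset.mem_sdiff.2 ⟨hxA, hxB⟩))) (not_le.2 hx)
          · intro hxB
            by_contra hxA
            exact absurd (Finset.min'_le _ x (Finset.mem_union_right _
              (Finset.mem_sdiff.2 ⟨hxB, hxA⟩))) (not_le.2 hx)
        rcases Finset.mem_union.1 hu with h | h
        · rcases Finset.mem_sdiff.1 h with ⟨h1, h2⟩
          exact Or.inl ((clexLt_iff n A B).2 ⟨u, h1, h2, hagree⟩)
        · rcases Finset.mem_sdiff.1 h with ⟨h1, h2⟩
          exact Or.inr (Or.inr ((clexLt_iff n B A).2
            ⟨u, h1, h2, fun x hx => (hagree x hx).symm⟩))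
    irrefl := fun A h => by
      rcases (clexLt_iff n A A).1 h with ⟨p, h1, h2, _⟩
      exact h2 h1
    trans := fun A B C hAB hBC => by
      rcases (clexLt_iff n A B).1 hAB with ⟨p, hpA, hpB, hp⟩
      rcases (clexLt_iff n B C).1 hBC with ⟨q, hqB, hqC, hq⟩
      rcases lt_trichotomy p q with h | h | h
      · exact (clexLt_iff n A C).2 ⟨p, hpA, fun hpC => hpB ((hq p h).2 hpC),
          fun x hx => (hp x hx).trans (hq x (hx.trans h))⟩
      · exact absurd (h ▸ hqB) hpB
      · exact (clexLt_iff n A C).2 ⟨q, (hp q h).2 hqB, hqC,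
          fun x hx => (hp x (hx.trans h)).trans (hq x hx)⟩ }

/-- The linearly ordered poset `Π_n = (𝒫({1,…,n}), ⊇, <c̄lex)`. -/
def PiN (n : ℕ) : LOP where
  carrier := Finset (Fin n)
  finite := inferInstance
  le := fun A B => B ⊆ A
  lt := clexLt n
  po :=
    { refl := fun A => Finset.Subset.refl A
      trans := fun _ _ _ hAB hBC => hBC.trans hAB
      antisymm := fun _ _ h1 h2 => Finset.Subset.antisymm h2 h1 }
  sto := clexLt_sto n
  extend := fun _ _ hle hne => Or.inl (hle.ssubset_of_ne (fun h => hne h.symm))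

/-- Replace the linear order of a linearly ordered poset by another linear
extension of the same partial order. -/
def LOP.reorder (A : LOP) (l : A.carrier → A.carrier → Prop)
    (h1 : IsStrictTotalOrder A.carrier l)
    (h2 : ∀ a b, A.le a b → a ≠ b → l a b) : LOP :=
  ⟨A.carrier, A.finite, A.le, l, A.po, h1, h2⟩

/-- The ordering property for a class of finite linearly ordered posets: for every
poset underlying a member there is a poset underlying a member such that any
linear extension of the former (lying in the class) embeds into any linear
extension of the latter (lying in the class). -/
def OrderingProp (K : LOP → Prop) : Prop :=
  ∀ A, K A → ∃ B, K B ∧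
    ∀ lA h1A h2A lB h1B h2B,
      K (A.reorder lA h1A h2A) → K (B.reorder lB h1B h2B) →
        (A.reorder lA h1A h2A).Embeds (B.reorder lB h1B h2B)

/-- A finite partially ordered set. -/
structure FPoset : Type 1 where
  carrier : Type
  finite : Finite carrier
  le : carrier → carrier → Prop
  po : IsPartialOrder carrier le

/-- The linearly ordered poset obtained from a finite poset and a linear extension
of its partial order. -/
def FPoset.toLOP (P : FPoset) (l : P.carrier → P.carrier → Prop)
    (h1 : IsStrictTotalOrder P.carrier l)
    (h2 : ∀ a b, P.le a b → a ≠ b → l a b) : LOP :=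
  ⟨P.carrier, P.finite, P.le, l, P.po, h1, h2⟩

open Function

instance FPoset.instPartialOrder (P : FPoset) : PartialOrder P.carrier where
  le := P.le
  le_refl := P.po.refl
  le_trans := P.po.trans
  le_antisymm := P.po.antisymm

instance FPoset.instFinite (P : FPoset) : Finite P.carrier := P.finite

def FPoset.of (α : Type) [Finite α] [PartialOrder α] : FPoset :=
  ⟨α, inferInstance, (· ≤ ·), inferInstance⟩

def FPoset.sigma {ι : Type} [Finite ι] (P : ι → FPoset) : FPoset :=
  FPoset.of (Σ i, (P i).carrier)

def FPoset.sigmaIncl {ι : Type} [Finite ι] (P : ι → FPoset) (i : ι) :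
    (P i).carrier ↪o (FPoset.sigma P).carrier :=
  OrderEmbedding.ofMapLEIff (Sigma.mk (β := fun j => (P j).carrier) i) fun _ _ =>
    Sigma.mk_le_mk_iff

def FPoset.addUpperBounds (P : FPoset) : FPoset where
  carrier := P.carrier ⊕ Set P.carrier
  finite := inferInstance
  le
    | .inl a, .inl b => a ≤ b
    | .inl a, .inr S => ∃ s ∈ S, a ≤ s
    | .inr S, .inr T => S = T
    | .inr _, .inl _ => False
  po :=
    { refl := by rintro (a | S) <;> rfl
      trans := by
        rintro (a | S) (b | T) (c | U) hab hbc <;> try contradiction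
        · exact le_trans hab hbc
        · obtain ⟨u, hu, hbu⟩ := hbc
          exact ⟨u, hu, le_trans hab hbu⟩
        · exact hbc ▸ hab
        · exact hab.trans hbc
      antisymm := by
        rintro (a | S) (b | T) hab hba <;> try contradiction
        · exact congrArg Sum.inl (le_antisymm hab hba)
        · exact congrArg Sum.inr hab }

def FPoset.addUpperBoundsIncl (P : FPoset) : P.carrier ↪o P.addUpperBounds.carrier :=
  OrderEmbedding.ofMapLEIff Sum.inl fun _ _ => Iff.rfl

namespace LOP

def erase (A : LOP) (m : A.carrier) : LOP where
  carrier := {a // a ≠ m}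
  finite := @Subtype.finite _ A.finite _
  le a b := A.le a b
  lt a b := A.lt a b
  po := haveI := A.po; (RelEmbedding.preimage (Embedding.subtype _) A.le).isPartialOrder
  sto := haveI := A.sto; (RelEmbedding.preimage (Embedding.subtype _) A.lt).isStrictTotalOrder
  extend a b hab hne := A.extend a b hab (Subtype.coe_ne_coe.2 hne)

theorem card_erase_lt (A : LOP) (m : A.carrier) :
    Nat.card (A.erase m).carrier < Nat.card A.carrier :=
  @Finite.card_subtype_lt _ A.finite _ m (· rfl)

theorem exists_lt_max (A : LOP) [Nonempty A.carrier] : ∃ m, ∀ a ≠ m, A.lt a m := by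
  have := A.finite
  have := A.sto
  obtain ⟨m, -, hm⟩ :=
    (Finite.wellFounded_of_trans_of_irrefl (swap A.lt)).has_min Set.univ Set.univ_nonempty
  refine ⟨m, fun a ha => ?_⟩
  rcases trichotomous_of A.lt a m with h | h | h
  exacts [h, absurd h ha, absurd h (hm a trivial)]

theorem embeds_of_isEmpty (A B : LOP) [IsEmpty A.carrier] : A.Embeds B :=
  ⟨isEmptyElim, fun a => isEmptyElim a, isEmptyElim, isEmptyElim⟩

theorem IsEmb.of_iff {A B : LOP} {f : A.carrier → B.carrier}
    (hle : ∀ a b, A.le a b ↔ B.le (f a) (f b)) (hlt : ∀ a b, A.lt a b ↔ B.lt (f a) (f b)) :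
    A.IsEmb B f := by
  have := B.sto
  refine ⟨fun a b hab => A.sto.trichotomous a b ?_ ?_, hle, hlt⟩ <;> intro h
  · exact irrefl (f b) (hab ▸ (hlt a b).1 h)
  · exact irrefl (f b) (hab ▸ (hlt b a).1 h)

theorem embeds_of_isEmb_erase {A B : LOP} {m : A.carrier} (hm : ∀ a ≠ m, A.lt a m)
    {f : (A.erase m).carrier → B.carrier} (hf : (A.erase m).IsEmb B f) {x : B.carrier}
    (hlt : ∀ a, B.lt (f a) x) (hle : ∀ a, A.le a.1 m ↔ B.le (f a) x)
    (hmax : ∀ a, ¬ B.le x (f a)) : A.Embeds B := by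
  classical
  have := A.sto
  have := B.sto
  have hm_le : ∀ a ≠ m, ¬ A.le m a := fun a ha h => asymm (A.extend m a h ha.symm) (hm a ha)
  let F : A.carrier → B.carrier := fun a => if h : a = m then x else f ⟨a, h⟩
  have hFm : F m = x := dif_pos rfl
  have hF : ∀ a : (A.erase m).carrier, F a.1 = f a := fun a => dif_neg a.2
  have cases : ∀ b, m = b ∨ ∃ a : (A.erase m).carrier, a.1 = b :=
    fun b => (eq_or_ne m b).imp_right fun hb => ⟨⟨b, hb.symm⟩, rfl⟩
  refine ⟨F, IsEmb.of_iff (fun a b => ?_) (fun a b => ?_)⟩ <;>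
    rcases cases a with rfl | ⟨a, rfl⟩ <;> rcases cases b with rfl | ⟨b, rfl⟩ <;>
    simp only [hFm, hF]
  · exact iff_of_true (A.po.refl m) (B.po.refl x)
  · exact iff_of_false (hm_le b.1 b.2) (hmax b)
  · exact hle a
  · exact hf.2.1 a b
  · exact iff_of_false (irrefl m) (irrefl x)
  · exact iff_of_false (asymm (hm b.1 b.2)) (asymm (hlt b))
  · exact iff_of_true (hm a.1 a.2) (hlt a)
  · exact hf.2.2 a b

theorem exists_lt_of_isEmb_pair {A B : LOP} {f : Bool → A.carrier → B.carrier}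
    (hf : ∀ s, A.IsEmb B (f s)) (hdisj : ∀ a b, f true a ≠ f false b) :
    ∃ s, ∀ a, ∃ b, B.lt (f s a) (f (!s) b) := by
  cases isEmpty_or_nonempty A.carrier
  · exact ⟨true, isEmptyElim⟩
  have := B.sto
  obtain ⟨c, hc⟩ := A.exists_lt_max
  have below : ∀ s a, f s a = f s c ∨ B.lt (f s a) (f s c) := fun s a =>
    (eq_or_ne a c).imp (congrArg (f s)) fun ha => ((hf s).2.2 a c).1 (hc a ha)
  have lt_of_lt : ∀ s, B.lt (f s c) (f (!s) c) → ∀ a, ∃ b, B.lt (f s a) (f (!s) b) :=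
    fun s h a => ⟨c, (below s a).elim (· ▸ h) (_root_.trans · h)⟩
  rcases trichotomous_of B.lt (f true c) (f false c) with h | h | h
  exacts [⟨true, lt_of_lt true h⟩, absurd h (hdisj c c), ⟨false, lt_of_lt false h⟩]

def EmbedsInAllLinExt (A : LOP) (Q : FPoset) : Prop :=
  ∀ l h1 h2, A.Embeds (Q.toLOP l h1 h2)

theorem EmbedsInAllLinExt.exists_isEmb_comp {A : LOP} {P Q : FPoset}
    (hA : A.EmbedsInAllLinExt P) (φ : P.carrier ↪o Q.carrier) (l h1 h2) :
    ∃ g, A.IsEmb (Q.toLOP l h1 h2) (φ ∘ g) := by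
  have := h1
  let r := RelEmbedding.preimage φ.toEmbedding l
  obtain ⟨g, hg, hle, hlt⟩ := hA (φ ⁻¹'o l) r.isStrictTotalOrder
    fun a b hab hne => h2 _ _ (φ.le_iff_le.2 hab) (φ.injective.ne hne)
  exact ⟨g, φ.injective.comp hg, fun a b => (hle a b).trans φ.le_iff_le.symm, hlt⟩

theorem EmbedsInAllLinExt.of_orderEmbedding {A : LOP} {P Q : FPoset}
    (hA : A.EmbedsInAllLinExt P) (φ : P.carrier ↪o Q.carrier) : A.EmbedsInAllLinExt Q :=
  fun l h1 h2 => (hA.exists_isEmb_comp φ l h1 h2).elim fun _ hg => ⟨_, hg⟩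

theorem EmbedsInAllLinExt.addUpperBounds_sigma {A : LOP} {m : A.carrier}
    (hm : ∀ a ≠ m, A.lt a m) {W : FPoset} (hW : (A.erase m).EmbedsInAllLinExt W) :
    A.EmbedsInAllLinExt (FPoset.sigma fun _ : Bool => W).addUpperBounds := by
  intro l h1 h2
  let ι (s : Bool) := (FPoset.sigmaIncl (fun _ : Bool => W) s).trans
    (FPoset.sigma fun _ : Bool => W).addUpperBoundsIncl
  choose g hg using fun s => hW.exists_isEmb_comp (ι s) l h1 h2
  obtain ⟨s, hs⟩ := exists_lt_of_isEmb_pair hg fun a b h =>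
    Bool.noConfusion (congrArg Sigma.fst (Sum.inl_injective h))
  let S : Set (FPoset.sigma fun _ : Bool => W).carrier :=
    (fun a => ⟨s, g s a⟩) '' {a | A.le a.1 m} ∪ Set.range fun a => ⟨!s, g (!s) a⟩
  refine embeds_of_isEmb_erase hm (hg s) (x := Sum.inr S) (fun a => ?_) (fun a => ?_)
    (fun a h => h)
  · obtain ⟨b, hb⟩ := hs a
    exact h1.trans _ _ _ hb (h2 _ _ ⟨_, Or.inr ⟨b, rfl⟩, le_rfl⟩ Sum.inl_ne_inr)
  · constructor
    · exact fun h => ⟨_, Or.inl ⟨a, h, rfl⟩, le_rfl⟩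
    · rintro ⟨_, ⟨b, hb, rfl⟩ | ⟨b, rfl⟩, hab⟩
      · exact A.po.trans _ _ _ (((hg s).2.1 a b).2 hab) hb
      · exact absurd (Sigma.le_def.1 hab).1 (Bool.eq_not_self s).1

theorem exists_embedsInAllLinExt (A : LOP) : ∃ Q : FPoset, A.EmbedsInAllLinExt Q := by
  induction hn : Nat.card A.carrier using Nat.strong_induction_on generalizing A with
  | _ n ih =>
  cases isEmpty_or_nonempty A.carrier
  · exact ⟨FPoset.of Empty, fun _ _ _ => A.embeds_of_isEmpty _⟩
  · obtain ⟨m, hm⟩ := A.exists_lt_max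
    obtain ⟨W, hW⟩ := ih _ (hn ▸ A.card_erase_lt m) (A.erase m) rfl
    exact ⟨_, hW.addUpperBounds_sigma hm⟩

end LOP

/-- The ordering property for the class of all finite linearly ordered posets:
for every finite poset `(A, ⊑)` there is a finite poset `(B, ⊑_B)` such that for
every linear extension `<` of `⊑` and every linear extension `⊏` of `⊑_B`,
`(A, ⊑, <)` embeds into `(B, ⊑_B, ⊏)`. -/
theorem stmt_6 :
    ∀ P : FPoset, ∃ Q : FPoset,
      ∀ lP h1P h2P lQ h1Q h2Q,
        (P.toLOP lP h1P h2P).Embeds (Q.toLOP lQ h1Q h2Q) := by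
  intro P
  choose Q hQ using fun l : {l : P.carrier → P.carrier → Prop //
      IsStrictTotalOrder P.carrier l ∧ ∀ a b, P.le a b → a ≠ b → l a b} =>
    (P.toLOP l.1 l.2.1 l.2.2).exists_embedsInAllLinExt
  exact ⟨FPoset.sigma Q, fun lP h1P h2P =>
    (hQ ⟨lP, h1P, h2P⟩).of_orderEmbedding (FPoset.sigmaIncl Q _)⟩
end

section
/- For every finite poset T = ({1, …, n}, ≼) (the template), the class P⃗_T^fin of finite linearly ordered multiposets conforming to T has the ordering property: for every finite consistent multiposet (A, ⊑_1, …, ⊑_n) conforming to T there is a finite consistent multiposet (B, ⊑'_1, …, ⊑'_n) conforming to T such that (A, ⊑_1, …, ⊑_n, <) embeds into (B, ⊑'_1, …, ⊑'_n, ⊏) for every linear order < on A extending each ⊑_i and every linear order ⊏ on B extending each ⊑'_i. -/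
/-- A finite multiposet with `n` partial orders `⊑_1, …, ⊑_n`. -/
structure MPoset (n : ℕ) : Type 1 where
  carrier : Type
  finite : Finite carrier
  rel : Fin n → carrier → carrier → Prop
  po : ∀ i, IsPartialOrder carrier (rel i)

/-- A multiposet conforms to the template `t` if `⊑_i ⊆ ⊑_j` whenever `i ≼ j`. -/
def MPoset.Conforms {n : ℕ} (A : MPoset n) (t : Fin n → Fin n → Prop) : Prop :=
  ∀ i j, t i j → ∀ a b, A.rel i a b → A.rel j a b

/-- A multiposet is consistent if some linear order extends every `⊑_i`. -/
def MPoset.Consistent {n : ℕ} (A : MPoset n) : Prop :=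
  ∃ l : A.carrier → A.carrier → Prop, IsStrictTotalOrder A.carrier l ∧
    ∀ i a b, A.rel i a b → a ≠ b → l a b

/-!
Induct on `|A|`. Given witnesses `W a` for all `A ∖ {a}`, form the core: one point together with
two disjoint copies of every `W a`, and let `B` be the core with a new top point for each family
`E = (E_i)` of subsets of the core, the top lying `⊑_i`-above exactly the `⊑_i`-down-closure of
`⋃_{j ≼ i} E_j`; this closure is what makes `B` conform to the template.

Given linear extensions `<` of `A` and `⊏` of `B`, let `a` be the `<`-largest element of `A` and
`c` the `⊏`-largest point of the core (which exists thanks to the extra point). Embed `A ∖ {a}` by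
some `g` into a copy of `W a` not containing `c`, and send `a` to the top with
`E_i = {c} ∪ g '' {b | b ⊑_i a}`. As `c ⊑_i` top, the top is `⊏`-above the whole core, while `c`,
living in another summand, creates no unwanted `⊑_i`-relation. For `n = 0` there are no partial
orders and `B = A` works, since two linear orders on a finite set are isomorphic.
-/

open Function

section StrictTotalOrder

variable {α : Type*} {r : α → α → Prop}

theorem IsStrictTotalOrder.exists_forall_ne_rel [IsStrictTotalOrder α r] [Finite α]
    [Nonempty α] : ∃ m, ∀ a, a ≠ m → r a m := by
  obtain ⟨m, -, hm⟩ :=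
    (Finite.wellFounded_of_trans_of_irrefl (Function.swap r)).has_min Set.univ Set.univ_nonempty
  refine ⟨m, fun a ha => ?_⟩
  rcases trichotomous_of r a m with h | h | h
  exacts [h, absurd h ha, absurd h (hm a trivial)]

theorem IsStrictTotalOrder.nonempty_relIso_of_finite [Finite α] (r s : α → α → Prop)
    [IsStrictTotalOrder α r] [IsStrictTotalOrder α s] : Nonempty (r ≃r s) := by
  have : IsWellOrder α r := { wf := Finite.wellFounded_of_trans_of_irrefl r }
  have : IsWellOrder α s := { wf := Finite.wellFounded_of_trans_of_irrefl s }
  have := Fintype.ofFinite α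
  exact Ordinal.type_eq.1 (by rw [Ordinal.type_fintype, Ordinal.type_fintype])

theorem rel_dite_iff {β : Type*} [DecidableEq α] {s : β → β → Prop} {a : α} {e : β}
    {g : {b // b ≠ a} → β} (hg : ∀ b c : {b // b ≠ a}, r b c ↔ s (g b) (g c))
    (hba : ∀ b : {b // b ≠ a}, r b a ↔ s (g b) e) (hab : ∀ b : {b // b ≠ a}, r a b ↔ s e (g b))
    (haa : r a a ↔ s e e) (b c : α) :
    r b c ↔ s (if h : b = a then e else g ⟨b, h⟩) (if h : c = a then e else g ⟨c, h⟩) := by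
  by_cases hb : b = a <;> by_cases hc : c = a <;> subst_vars <;> simp_all

end StrictTotalOrder

instance {α : Sort*} : IsTrans α emptyRelation := ⟨fun _ _ _ h => h.elim⟩

instance {α : Sort*} : Std.Asymm (@emptyRelation α) := ⟨fun _ _ h => h.elim⟩

namespace MPoset

variable {n : ℕ} {t : Fin n → Fin n → Prop}

instance (A : MPoset n) : Finite A.carrier := A.finite

instance (A : MPoset n) (i : Fin n) : IsPartialOrder A.carrier (A.rel i) := A.po i

def IsExtendedBy (A : MPoset n) (l : A.carrier → A.carrier → Prop) : Prop :=
  ∀ i a b, A.rel i a b → a ≠ b → l a b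

def EmbedsUnderAllExtensions (A B : MPoset n) : Prop :=
  ∀ lA, IsStrictTotalOrder A.carrier lA → A.IsExtendedBy lA →
    ∀ lB, IsStrictTotalOrder B.carrier lB → B.IsExtendedBy lB →
      ∃ f : A.carrier → B.carrier, Injective f ∧
        (∀ i a b, A.rel i a b ↔ B.rel i (f a) (f b)) ∧ ∀ a b, lA a b ↔ lB (f a) (f b)

theorem embedsUnderAllExtensions_self_of_fin_zero (A : MPoset 0) :
    A.EmbedsUnderAllExtensions A := by
  intro lA _ _ lB _ _
  obtain ⟨f⟩ := IsStrictTotalOrder.nonempty_relIso_of_finite lA lB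
  exact ⟨f, f.injective, fun i => i.elim0, fun a b => f.map_rel_iff.symm⟩

theorem exists_embedding_extend_top {A B : MPoset n} {lA : A.carrier → A.carrier → Prop}
    {lB : B.carrier → B.carrier → Prop} [IsStrictTotalOrder A.carrier lA]
    [IsStrictTotalOrder B.carrier lB] (hlA : A.IsExtendedBy lA) {a : A.carrier}
    (ha : ∀ b, b ≠ a → lA b a) {g : {b // b ≠ a} → B.carrier} (hg : Injective g)
    (hg_rel : ∀ i (b b' : {b // b ≠ a}), A.rel i b b' ↔ B.rel i (g b) (g b'))
    (hg_lt : ∀ b b' : {b // b ≠ a}, lA b b' ↔ lB (g b) (g b')) {e : B.carrier}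
    (he : ∀ b, e ≠ g b) (he_rel : ∀ i (b : {b // b ≠ a}), A.rel i b a ↔ B.rel i (g b) e)
    (he_not_rel : ∀ i b, ¬ B.rel i e (g b)) (he_lt : ∀ b, lB (g b) e) :
    ∃ f : A.carrier → B.carrier, Injective f ∧
      (∀ i a b, A.rel i a b ↔ B.rel i (f a) (f b)) ∧ ∀ a b, lA a b ↔ lB (f a) (f b) := by
  classical
  have hA_lt (b : {b // b ≠ a}) : lA b a := ha b b.2
  refine ⟨fun b => if h : b = a then e else g ⟨b, h⟩,
    Injective.dite (· = a) (f := fun _ => e) (injective_of_subsingleton _) hg (he _),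
    fun i => rel_dite_iff (r := A.rel i) (hg_rel i) (he_rel i)
      (fun b => iff_of_false (fun h => asymm (hlA i _ _ h b.2.symm) (hA_lt b)) (he_not_rel i b))
      (iff_of_true (refl a) (refl e)),
    rel_dite_iff hg_lt (fun b => iff_of_true (hA_lt b) (he_lt b))
      (fun b => iff_of_false (asymm (hA_lt b)) (asymm (he_lt b)))
      (iff_of_false (irrefl a) (irrefl e))⟩

abbrev restrict (A : MPoset n) (p : A.carrier → Prop) : MPoset n where
  carrier := Subtype p
  finite := inferInstance
  rel i := A.rel i on Subtype.val
  po _ := Subtype.val_injective.isPartialOrder_onFun _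

theorem Conforms.restrict {A : MPoset n} (hA : A.Conforms t) (p : A.carrier → Prop) :
    (A.restrict p).Conforms t :=
  fun i j hij a b => hA i j hij a b

theorem card_restrict_ne_lt (A : MPoset n) (a : A.carrier) :
    Nat.card (A.restrict (· ≠ a)).carrier < Nat.card A.carrier :=
  Finite.card_subtype_lt (p := (· ≠ a)) (x := a) (by simp)

abbrev point (n : ℕ) : MPoset n where
  carrier := Unit
  finite := inferInstance
  rel _ := (· ≤ ·)
  po _ := inferInstance

theorem conforms_point : (point n).Conforms t :=
  fun _ _ _ _ _ h => h

theorem consistent_point : (point n).Consistent :=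
  ⟨WellOrderingRel, inferInstance, fun _ a b _ hne => absurd (Subsingleton.elim a b) hne⟩

section Sigma

variable {ι : Type} [Finite ι] {F : ι → MPoset n}

abbrev sigma (F : ι → MPoset n) : MPoset n where
  carrier := Σ j, (F j).carrier
  finite := inferInstance
  rel i := Sigma.Lex emptyRelation fun j => (F j).rel i
  po _ := { }

theorem sigma_rel_mk_iff {i : Fin n} {j : ι} {a b : (F j).carrier} :
    (sigma F).rel i ⟨j, a⟩ ⟨j, b⟩ ↔ (F j).rel i a b := by
  simp [Sigma.lex_iff]

theorem fst_eq_of_sigma_rel {i : Fin n} {x y : (sigma F).carrier} (h : (sigma F).rel i x y) :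
    x.1 = y.1 := by
  cases h with
  | left _ _ h => exact h.elim
  | right => rfl

theorem Conforms.sigma (hF : ∀ j, (F j).Conforms t) : (sigma F).Conforms t :=
  fun i i' hii' _ _ h => h.mono_right fun j a b => hF j i i' hii' a b

theorem Consistent.sigma (hF : ∀ j, (F j).Consistent) : (sigma F).Consistent := by
  choose l hl hext using hF
  refine ⟨Sigma.Lex WellOrderingRel l, { }, fun i x y hxy hne => ?_⟩
  cases hxy with
  | left _ _ h => exact h.elim
  | right a b h => exact Sigma.Lex.right (s := l) a b (hext _ i a b h fun hab => hne (hab ▸ rfl))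

end Sigma

section AddTops

variable (t) in
abbrev addTops (C : MPoset n) : MPoset n where
  carrier := C.carrier ⊕ (Fin n → Set C.carrier)
  finite := inferInstance
  rel i
    | .inl c, .inl c' => C.rel i c c'
    | .inl c, .inr E => ∃ j, t j i ∧ ∃ e ∈ E j, C.rel i c e
    | .inr _, .inl _ => False
    | .inr E, .inr E' => E = E'
  po i := {
    refl := by
      rintro (c | E)
      exacts [refl_of (C.rel i) c, rfl]
    trans := by
      rintro (c | E) (c' | E') (c'' | E'') h₁ h₂ <;> try contradiction
      · exact _root_.trans h₁ h₂
      · obtain ⟨j, hj, e, he, hc'e⟩ := h₂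
        exact ⟨j, hj, e, he, _root_.trans h₁ hc'e⟩
      · exact h₂ ▸ h₁
      · exact h₁.trans h₂
    antisymm := by
      rintro (c | E) (c' | E') h₁ h₂ <;> try contradiction
      · exact congrArg Sum.inl (antisymm h₁ h₂)
      · exact congrArg Sum.inr h₁ }

variable {C : MPoset n}

theorem Conforms.addTops [IsTrans (Fin n) t] (hC : C.Conforms t) : (addTops t C).Conforms t := by
  rintro i i' hii' (c | E) (c' | E') h
  · exact hC i i' hii' c c' h
  · obtain ⟨j, hj, e, he, hce⟩ := h
    exact ⟨j, _root_.trans hj hii', e, he, hC i i' hii' c e hce⟩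
  · exact h
  · exact h

theorem Consistent.addTops (hC : C.Consistent) : (addTops t C).Consistent := by
  obtain ⟨l, hl, hext⟩ := hC
  refine ⟨Sum.Lex l WellOrderingRel, { }, ?_⟩
  rintro i (c | E) (c' | E') h hne
  · exact Sum.Lex.inl (hext i c c' h (hne <| congrArg _ ·))
  · exact Sum.Lex.sep _ _
  · exact h.elim
  · exact absurd (congrArg Sum.inr h) hne

theorem IsExtendedBy.inl_rel_inr_of_forall_rel_inl
    {l : (addTops t C).carrier → (addTops t C).carrier → Prop} [IsTrans _ l]
    (hl : (addTops t C).IsExtendedBy l) {i : Fin n} (hi : t i i) {c : C.carrier}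
    (hc : ∀ x, x ≠ c → l (.inl x) (.inl c)) {E : Fin n → Set C.carrier} (hcE : c ∈ E i)
    (x : C.carrier) : l (.inl x) (.inr E) := by
  have hcE : l (.inl c) (.inr E) :=
    hl i (.inl c) (.inr E) ⟨i, hi, c, hcE, refl_of (C.rel i) c⟩ Sum.inl_ne_inr
  rcases eq_or_ne x c with rfl | hx
  exacts [hcE, _root_.trans (hc x hx) hcE]

theorem addTops_sigma_rel_iff {ι : Type} [Finite ι] {F : ι → MPoset n} {i : Fin n} (hi : t i i)
    {p : ι} {c : (sigma F).carrier} (hc : c.1 ≠ p) {D : Fin n → Set (F p).carrier}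
    {x : (F p).carrier} (hD : ∀ j y, t j i → y ∈ D j → (F p).rel i x y → x ∈ D i) :
    (addTops t (sigma F)).rel i (.inl ⟨p, x⟩) (.inr fun j => insert c (Sigma.mk p '' D j)) ↔
      x ∈ D i := by
  constructor
  · rintro ⟨j, hj, e, rfl | ⟨y, hy, rfl⟩, hxe⟩
    · exact absurd (fst_eq_of_sigma_rel hxe).symm hc
    · exact hD j y hj hy (sigma_rel_mk_iff.1 hxe)
  · intro hx
    exact ⟨i, hi, ⟨p, x⟩, Set.mem_insert_of_mem _ ⟨x, hx, rfl⟩, refl_of ((sigma F).rel i) _⟩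

end AddTops

section Witness

variable {α : Type} [Finite α] {W : α → MPoset n}

abbrev core (W : α → MPoset n) : MPoset n :=
  sigma fun o : Option (α × Bool) => o.elim (point n) fun q => W q.1

theorem Conforms.core (hW : ∀ a, (W a).Conforms t) : (core W).Conforms t :=
  Conforms.sigma fun o => by cases o; exacts [conforms_point, hW _]

theorem Consistent.core (hW : ∀ a, (W a).Consistent) : (core W).Consistent :=
  Consistent.sigma fun o => by cases o; exacts [consistent_point, hW _]

theorem core_rel_mk_some_iff {i : Fin n} {q : α × Bool} {w w' : (W q.1).carrier} :
    (core W).rel i ⟨some q, w⟩ ⟨some q, w'⟩ ↔ (W q.1).rel i w w' :=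
  sigma_rel_mk_iff

theorem embedsUnderAllExtensions_addTops_core [IsPreorder (Fin n) t] (hn : n ≠ 0)
    {A : MPoset n} (hA : A.Conforms t) {W : A.carrier → MPoset n}
    (hW : ∀ a, (A.restrict (· ≠ a)).EmbedsUnderAllExtensions (W a)) :
    A.EmbedsUnderAllExtensions (addTops t (core W)) := by
  intro lA hlA hlAext lB hlB hlBext
  rcases isEmpty_or_nonempty A.carrier with hA₀ | hA₀
  · exact ⟨isEmptyElim, fun a => isEmptyElim a, fun _ a => isEmptyElim a, fun a => isEmptyElim a⟩
  classical
  obtain ⟨a, ha⟩ := IsStrictTotalOrder.exists_forall_ne_rel (r := lA)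
  have : IsStrictTotalOrder (core W).carrier (lB on Sum.inl) :=
    Injective.isStrictTotalOrder_onFun lB Sum.inl_injective
  have : Nonempty (core W).carrier := ⟨⟨none, ()⟩⟩
  obtain ⟨c, hc⟩ := IsStrictTotalOrder.exists_forall_ne_rel (r := lB on Sum.inl)
  obtain ⟨ι, hι⟩ : ∃ ι : Bool, c.1 ≠ some (a, ι) := by
    by_cases h : c.1 = some (a, true)
    exacts [⟨false, by simp [h]⟩, ⟨true, h⟩]
  let inc : (W a).carrier → (addTops t (core W)).carrier := fun w => .inl ⟨some (a, ι), w⟩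
  have hinc : Injective inc := Sum.inl_injective.comp sigma_mk_injective
  have hinc_rel (i : Fin n) (w w' : (W a).carrier) :
      (W a).rel i w w' ↔ (addTops t (core W)).rel i (inc w) (inc w') :=
    (core_rel_mk_some_iff (W := W) (q := (a, ι))).symm
  obtain ⟨g, hg, hg_rel, hg_lt⟩ := hW a (lA on Subtype.val)
    (Injective.isStrictTotalOrder_onFun lA Subtype.val_injective)
    (fun i b b' h hne => hlAext i b b' h (Subtype.val_injective.ne hne))
    (lB on inc) (Injective.isStrictTotalOrder_onFun lB hinc)
    (fun i w w' h hne => hlBext i _ _ ((hinc_rel i w w').1 h) (hinc.ne hne))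
  let E : Fin n → Set (core W).carrier :=
    fun i => insert c (Sigma.mk (some (a, ι)) '' (g '' {b | A.rel i b a}))
  have hE_rel (i : Fin n) (b : {b // b ≠ a}) :
      A.rel i b a ↔ (addTops t (core W)).rel i (inc (g b)) (.inr E) := by
    refine ((addTops_sigma_rel_iff (D := fun j => g '' {b | A.rel j b a}) (refl i) hι ?_).trans
      hg.mem_set_image).symm
    rintro j _ hji ⟨b', hb'a, rfl⟩ hbb'
    exact ⟨b, _root_.trans ((hg_rel i b b').2 hbb') (hA j i hji _ _ hb'a), rfl⟩
  have hE_lt : ∀ x, lB (.inl x) (.inr E) :=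
    hlBext.inl_rel_inr_of_forall_rel_inl (refl ⟨0, Nat.pos_of_ne_zero hn⟩) hc (Set.mem_insert c _)
  exact exists_embedding_extend_top hlAext ha (hinc.comp hg)
    (fun i b b' => (hg_rel i b b').trans (hinc_rel i _ _)) hg_lt (fun _ => Sum.inr_ne_inl) hE_rel
    (fun _ _ => id) (fun b => hE_lt _)

theorem exists_embedsUnderAllExtensions [IsPreorder (Fin n) t] (hn : n ≠ 0) (A : MPoset n)
    (hA : A.Conforms t) :
    ∃ B : MPoset n, B.Conforms t ∧ B.Consistent ∧ A.EmbedsUnderAllExtensions B := by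
  induction hk : Nat.card A.carrier using Nat.strong_induction_on generalizing A with
  | _ k ih =>
  choose W hW_conf hW_cons hW using fun a : A.carrier =>
    ih _ (hk ▸ A.card_restrict_ne_lt a) (A.restrict (· ≠ a)) (hA.restrict _) rfl
  exact ⟨addTops t (core W), (Conforms.core hW_conf).addTops, (Consistent.core hW_cons).addTops,
    embedsUnderAllExtensions_addTops_core hn hA hW⟩

end Witness

end MPoset

/-- For every template `t` (a partial order on `{1, …, n}`), the class of finite
linearly ordered multiposets conforming to `t` has the ordering property. -/
theorem stmt_13 (n : ℕ) (t : Fin n → Fin n → Prop)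
    (ht : IsPartialOrder (Fin n) t) :
    ∀ A : MPoset n, A.Conforms t → A.Consistent →
      ∃ B : MPoset n, B.Conforms t ∧ B.Consistent ∧
        ∀ (lA : A.carrier → A.carrier → Prop)
          (_ : IsStrictTotalOrder A.carrier lA)
          (_ : ∀ i a b, A.rel i a b → a ≠ b → lA a b)
          (lB : B.carrier → B.carrier → Prop)
          (_ : IsStrictTotalOrder B.carrier lB)
          (_ : ∀ i a b, B.rel i a b → a ≠ b → lB a b),
          ∃ f : A.carrier → B.carrier, Function.Injective f ∧
            (∀ i a b, A.rel i a b ↔ B.rel i (f a) (f b)) ∧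
            (∀ a b, lA a b ↔ lB (f a) (f b)) := by
  intro A hA hA_cons
  rcases eq_or_ne n 0 with rfl | hn
  · exact ⟨A, hA, hA_cons, A.embedsUnderAllExtensions_self_of_fin_zero⟩
  · exact MPoset.exists_embedsUnderAllExtensions hn A hA
end

section
/- Let T = ({1, …, n}, ≼) be a finite poset (template). For every two-element structure σ = ({a, b}, ⊑_1, …, ⊑_n, <) in P⃗_T^fin with a < b, there exists a structure (D, ⊑'_1, …, ⊑'_n, <_D) in P⃗_T^fin and elements x, y, z ∈ D with x <_D y <_D z such that the substructure of D on {x, z} is isomorphic to σ via a ↦ x, b ↦ z, and y is ⊑'_i-incomparable with both x and z for every i ∈ {1, …, n}. Consequently, P⃗_T^fin satisfies the weak triangle condition, witnessed by the two-element structure τ in which the two elements are incomparable in every partial order. -/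
/-- A finite linearly ordered multiposet with `n` partial orders
`⊑_1, …, ⊑_n` and a linear order `<` extending each of them (hence the
underlying multiposet is consistent). -/
structure OMPoset (n : ℕ) : Type 1 where
  carrier : Type
  finite : Finite carrier
  rel : Fin n → carrier → carrier → Prop
  po : ∀ i, IsPartialOrder carrier (rel i)
  lt : carrier → carrier → Prop
  sto : IsStrictTotalOrder carrier lt
  extend : ∀ i a b, rel i a b → a ≠ b → lt a b

/-- An ordered multiposet conforms to the template `t` if `⊑_i ⊆ ⊑_j`
whenever `i ≼ j`. -/
def OMPoset.Conforms {n : ℕ} (A : OMPoset n) (t : Fin n → Fin n → Prop) : Prop :=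
  ∀ i j, t i j → ∀ a b, A.rel i a b → A.rel j a b

/-- Embeddings of ordered multiposets. -/
def OMPoset.IsEmb {n : ℕ} (A B : OMPoset n) (f : A.carrier → B.carrier) : Prop :=
  Function.Injective f ∧
    (∀ i a b, A.rel i a b ↔ B.rel i (f a) (f b)) ∧
    (∀ a b, A.lt a b ↔ B.lt (f a) (f b))

/-- `S` is (the underlying set of) a substructure of `C` isomorphic to `A`. -/
def OMPoset.IsCopy {n : ℕ} (A C : OMPoset n) (S : Set C.carrier) : Prop :=
  ∃ f, A.IsEmb C f ∧ Set.range f = S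

/-- A two-element structure. -/
def OMPoset.TwoElem {n : ℕ} (A : OMPoset n) : Prop :=
  ∃ u v : A.carrier, u ≠ v ∧ ∀ c, c = u ∨ c = v

/-!
Given `σ = ({a, b}, ⊑_1, …, ⊑_n, <)` with `a < b`, the three-element chain `0 < 1 < 2` in which
`0 ⊑_i 2` holds exactly when `a ⊑_i b`, and no other pair is comparable, conforms to the template
because `σ` does; `{0, 2}` is a copy of `σ`, while `{0, 1}` and `{1, 2}` are copies of the
two-element antichain `τ`.
-/

namespace OMPoset

variable {n : ℕ}

theorem lt_asymm (A : OMPoset n) {a b : A.carrier} (h : A.lt a b) : ¬ A.lt b a :=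
  fun h' => A.sto.irrefl a (A.sto.trans _ _ _ h h')

theorem ne_of_lt (A : OMPoset n) {a b : A.carrier} (h : A.lt a b) : a ≠ b := by
  rintro rfl
  exact A.sto.irrefl a h

theorem not_rel_of_lt (A : OMPoset n) {a b : A.carrier} (h : A.lt a b) (i : Fin n) :
    ¬ A.rel i b a :=
  fun hr => A.lt_asymm h (A.extend i b a hr (A.ne_of_lt h).symm)

theorem exists_lt_of_twoElem (A : OMPoset n) (hA : A.TwoElem) :
    ∃ a b : A.carrier, A.lt a b ∧ ∀ c, c = a ∨ c = b := by
  obtain ⟨u, v, huv, hall⟩ := hA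
  have := A.sto
  rcases trichotomous_of A.lt u v with h | h | h
  · exact ⟨u, v, h, hall⟩
  · exact absurd h huv
  · exact ⟨v, u, h, fun c => (hall c).symm⟩

/-- Only `a ⊑_i b` has to be matched: `b ⊑_i a` is ruled out on both sides by the linear orders. -/
theorem exists_isEmb_of_two {A B : OMPoset n} {a b : A.carrier} {x z : B.carrier}
    (hab : A.lt a b) (hA : ∀ c, c = a ∨ c = b) (hxz : B.lt x z)
    (hrel : ∀ i, A.rel i a b ↔ B.rel i x z) :
    ∃ f : A.carrier → B.carrier, A.IsEmb B f ∧ f a = x ∧ f b = z := by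
  classical
  let f : A.carrier → B.carrier := fun c => if c = a then x else z
  have fa : f a = x := if_pos rfl
  have fb : f b = z := if_neg (A.ne_of_lt hab).symm
  refine ⟨f, ⟨?_, fun i c d => ?_, fun c d => ?_⟩, fa, fb⟩
  · intro c d h
    rcases hA c with rfl | rfl <;> rcases hA d with rfl | rfl <;>
      simp_all [(B.ne_of_lt hxz).symm]
  · rcases hA c with rfl | rfl <;> rcases hA d with rfl | rfl <;>
      simp_all [(A.po i).refl, (B.po i).refl, A.not_rel_of_lt hab, B.not_rel_of_lt hxz]
  · rcases hA c with rfl | rfl <;> rcases hA d with rfl | rfl <;>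
      simp_all [A.sto.irrefl, B.sto.irrefl, A.lt_asymm hab, B.lt_asymm hxz]

theorem isCopy_of_two {A B : OMPoset n} {a b : A.carrier} {x z : B.carrier}
    (hab : A.lt a b) (hA : ∀ c, c = a ∨ c = b) (hxz : B.lt x z)
    (hrel : ∀ i, A.rel i a b ↔ B.rel i x z) : A.IsCopy B {x, z} := by
  obtain ⟨f, hf, rfl, rfl⟩ := exists_isEmb_of_two hab hA hxz hrel
  refine ⟨f, hf, Set.ext fun w => ⟨?_, ?_⟩⟩
  · rintro ⟨c, rfl⟩
    rcases hA c with rfl | rfl <;> simp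
  · rintro (rfl | rfl) <;> exact ⟨_, rfl⟩

abbrev triangle (p : Fin n → Prop) : OMPoset n where
  carrier := Fin 3
  finite := inferInstance
  rel i x y := x = y ∨ (x = 0 ∧ y = 2 ∧ p i)
  po i :=
    { refl := fun _ => Or.inl rfl
      trans := by
        rintro x y z (rfl | ⟨rfl, rfl, h⟩) hyz
        · exact hyz
        · rcases hyz with rfl | ⟨h₀, -, -⟩
          exacts [Or.inr ⟨rfl, rfl, h⟩, absurd h₀ (by simp)]
      antisymm := by
        rintro x y (rfl | ⟨rfl, rfl, -⟩) (h | ⟨h₀, -, -⟩)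
        exacts [rfl, rfl, h.symm, absurd h₀ (by simp)] }
  lt x y := x < y
  sto := inferInstance
  extend i x y := by
    rintro (rfl | ⟨rfl, rfl, -⟩) hne
    exacts [absurd rfl hne, by simp]

variable {p : Fin n → Prop}

theorem triangle_conforms {t : Fin n → Fin n → Prop} (hp : ∀ i j, t i j → p i → p j) :
    (triangle p).Conforms t := by
  rintro i j hij x y (rfl | ⟨rfl, rfl, h⟩)
  exacts [Or.inl rfl, Or.inr ⟨rfl, rfl, hp i j hij h⟩]

abbrev antichain (n m : ℕ) : OMPoset n where
  carrier := Fin m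
  finite := inferInstance
  rel _ := Eq
  po _ := { refl := Eq.refl, trans := fun _ _ _ => Eq.trans, antisymm := fun _ _ h _ => h }
  lt x y := x < y
  sto := inferInstance
  extend _ _ _ h hne := absurd h hne

theorem antichain_conforms (t : Fin n → Fin n → Prop) (m : ℕ) : (antichain n m).Conforms t :=
  fun _ _ _ _ _ h => h

theorem antichain_isCopy_triangle_zero_one :
    (antichain n 2).IsCopy (triangle p) {(0 : Fin 3), (1 : Fin 3)} :=
  isCopy_of_two (a := (0 : Fin 2)) (b := 1) (by simp) (Fin.forall_fin_two.2 ⟨.inl rfl, .inr rfl⟩)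
    (by simp) fun i => iff_of_false (by simp) (by simp)

theorem antichain_isCopy_triangle_one_two :
    (antichain n 2).IsCopy (triangle p) {(1 : Fin 3), (2 : Fin 3)} :=
  isCopy_of_two (a := (0 : Fin 2)) (b := 1) (by simp) (Fin.forall_fin_two.2 ⟨.inl rfl, .inr rfl⟩)
    (by simp) fun i => iff_of_false (by simp) (by simp)

end OMPoset

theorem stmt_14_general (n : ℕ) (t : Fin n → Fin n → Prop) :
    -- main claim: every two-element member `σ = ({a,b}, …, a < b)` sits as the
    -- substructure on `{x, z}` of some member `D` with `x < y < z`, where `y`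
    -- is incomparable with `x` and `z` in every partial order of `D`
    (∀ (σ : OMPoset n), σ.Conforms t →
      ∀ a b : σ.carrier, σ.lt a b → (∀ c, c = a ∨ c = b) →
        ∃ D : OMPoset n, D.Conforms t ∧ ∃ x y z : D.carrier,
          D.lt x y ∧ D.lt y z ∧
          (∀ i, (σ.rel i a b ↔ D.rel i x z) ∧ (σ.rel i b a ↔ D.rel i z x)) ∧
          (σ.lt a b ↔ D.lt x z) ∧ (σ.lt b a ↔ D.lt z x) ∧
          (∀ i, ¬ D.rel i x y ∧ ¬ D.rel i y x ∧ ¬ D.rel i y z ∧ ¬ D.rel i z y))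
    ∧
    -- consequence: the weak triangle condition holds, witnessed by the
    -- two-element structure `τ` whose elements are incomparable in every
    -- partial order
    (∃ τ : OMPoset n, τ.Conforms t ∧ τ.TwoElem ∧
      (∀ i (u v : τ.carrier), τ.rel i u v → u = v) ∧
      ∀ σ : OMPoset n, σ.Conforms t → σ.TwoElem →
        ∃ D : OMPoset n, D.Conforms t ∧ ∃ x y z : D.carrier,
          D.lt x y ∧ D.lt y z ∧
          σ.IsCopy D {x, z} ∧ τ.IsCopy D {x, y} ∧ τ.IsCopy D {y, z}) := by
  refine ⟨fun σ hσ a b hab hA => ?_, ?_⟩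
  · obtain ⟨f, hf, hfa, hfb⟩ := OMPoset.exists_isEmb_of_two
      (B := OMPoset.triangle (σ.rel · a b)) (x := (0 : Fin 3)) (z := 2) hab hA (by simp)
      fun i => by simp
    refine ⟨OMPoset.triangle (σ.rel · a b), OMPoset.triangle_conforms fun i j hij => hσ i j hij a b,
      0, 1, 2, by simp, by simp, fun i => ⟨?_, ?_⟩, ?_, ?_, fun i => by simp⟩
    all_goals first | rw [hf.2.1, hfa, hfb] | rw [hf.2.2, hfa, hfb]
  · refine ⟨OMPoset.antichain n 2, OMPoset.antichain_conforms t 2,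
      ⟨0, 1, by simp, Fin.forall_fin_two.2 ⟨.inl rfl, .inr rfl⟩⟩, fun _ _ _ h => h,
      fun σ hσ hσ₂ => ?_⟩
    obtain ⟨a, b, hab, hA⟩ := σ.exists_lt_of_twoElem hσ₂
    exact ⟨OMPoset.triangle (σ.rel · a b), OMPoset.triangle_conforms fun i j hij => hσ i j hij a b,
      0, 1, 2, by simp, by simp, OMPoset.isCopy_of_two hab hA (by simp) fun i => by simp,
      OMPoset.antichain_isCopy_triangle_zero_one, OMPoset.antichain_isCopy_triangle_one_two⟩

theorem stmt_14 (n : ℕ) (t : Fin n → Fin n → Prop)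
    (ht : IsPartialOrder (Fin n) t) :
    -- main claim: every two-element member `σ = ({a,b}, …, a < b)` sits as the
    -- substructure on `{x, z}` of some member `D` with `x < y < z`, where `y`
    -- is incomparable with `x` and `z` in every partial order of `D`
    (∀ (σ : OMPoset n), σ.Conforms t →
      ∀ a b : σ.carrier, σ.lt a b → (∀ c, c = a ∨ c = b) →
        ∃ D : OMPoset n, D.Conforms t ∧ ∃ x y z : D.carrier,
          D.lt x y ∧ D.lt y z ∧
          (∀ i, (σ.rel i a b ↔ D.rel i x z) ∧ (σ.rel i b a ↔ D.rel i z x)) ∧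
          (σ.lt a b ↔ D.lt x z) ∧ (σ.lt b a ↔ D.lt z x) ∧
          (∀ i, ¬ D.rel i x y ∧ ¬ D.rel i y x ∧ ¬ D.rel i y z ∧ ¬ D.rel i z y))
    ∧
    -- consequence: the weak triangle condition holds, witnessed by the
    -- two-element structure `τ` whose elements are incomparable in every
    -- partial order
    (∃ τ : OMPoset n, τ.Conforms t ∧ τ.TwoElem ∧
      (∀ i (u v : τ.carrier), τ.rel i u v → u = v) ∧
      ∀ σ : OMPoset n, σ.Conforms t → σ.TwoElem →
        ∃ D : OMPoset n, D.Conforms t ∧ ∃ x y z : D.carrier,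
          D.lt x y ∧ D.lt y z ∧
          σ.IsCopy D {x, z} ∧ τ.IsCopy D {x, y} ∧ τ.IsCopy D {y, z}) :=
  stmt_14_general n t
end
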